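/- With the notation of the CB-NOMA model, the conditional average minimal transmit power satisfies the upper bound E_t[P_min] ≤ P̃_lo(t)·(1 + min(β2/β1, γ2/γ1)). -/

import Mathlib

/-!
Since `1 / min a b ≤ 1 / a + 1 / b`, the minimal power is at most
`(γ1 (1 + γ2) + γ2) / (β1 x) + γ2 / (β2 y z)`, whose expectation factorises. For `x ∼ Gamma(M, 1)`
one has `E[1 / x] = 1 / (M - 1)`, so this expectation is `P̃_lo(t) + γ2 / ((M - 1) β1)`. The extra
term is at most the first summand of `P̃_lo(t)` times `γ2 / γ1` (as `1 ≤ 1 + γ2`), and at most the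
second summand times `β2 / β1`, because
`∫_t^1 (1 - z)^(M-2) / z dz ≥ ∫_t^1 (1 - z)^(M-2) dz = (1 - t)^(M-1) / (M - 1)`.
-/

open MeasureTheory Set

noncomputable def erlangPDF (M : ℕ) (x : ℝ) : ℝ :=
  x ^ (M - 1) * Real.exp (-x) / (Nat.factorial (M - 1) : ℝ)

-- `b_t(z)`: density of the squared channel correlation conditioned on `z ≥ t`.
noncomputable def condCorrPDF (M : ℕ) (t z : ℝ) : ℝ :=
  ((M : ℝ) - 1) * (1 - z) ^ (M - 2) / (1 - t) ^ (M - 1)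

noncomputable def pMin (β1 β2 γ1 γ2 x y z : ℝ) : ℝ :=
  γ1 * (1 + γ2) / (β1 * x) + γ2 / min (β1 * x) (β2 * y * z)

lemma setIntegral_mono_on_of_nonneg {α : Type*} [MeasurableSpace α] {μ : Measure α} {s : Set α}
    (hs : MeasurableSet s) {f g : α → ℝ} (hf : ∀ x ∈ s, 0 ≤ f x) (hfg : ∀ x ∈ s, f x ≤ g x)
    (hg : IntegrableOn g s μ) : ∫ x in s, f x ∂μ ≤ ∫ x in s, g x ∂μ :=
  integral_mono_of_nonneg (ae_restrict_of_forall_mem hs hf) hg (ae_restrict_of_forall_mem hs hfg)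

lemma integrableOn_pow_mul_exp_neg (n : ℕ) :
    IntegrableOn (fun x : ℝ => x ^ n * Real.exp (-x)) (Ioi 0) := by
  refine (Real.GammaIntegral_convergent (s := (n : ℝ) + 1) (by positivity)).congr_fun
    (fun x _ => ?_) measurableSet_Ioi
  beta_reduce
  rw [add_sub_cancel_right, Real.rpow_natCast, mul_comm]

lemma integral_pow_mul_exp_neg (n : ℕ) :
    ∫ x in Ioi (0 : ℝ), x ^ n * Real.exp (-x) = n.factorial := by
  rw [← Real.Gamma_nat_eq_factorial, Real.Gamma_eq_integral (by positivity)]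
  refine setIntegral_congr_fun measurableSet_Ioi fun x _ => ?_
  rw [add_sub_cancel_right, Real.rpow_natCast, mul_comm]

section Erlang

variable {M : ℕ}

lemma erlangPDF_nonneg {x : ℝ} (hx : 0 ≤ x) : 0 ≤ erlangPDF M x := by
  unfold erlangPDF; positivity

lemma integrableOn_erlangPDF (M : ℕ) : IntegrableOn (erlangPDF M) (Ioi 0) :=
  (integrableOn_pow_mul_exp_neg (M - 1)).div_const _

lemma integral_erlangPDF (M : ℕ) : ∫ x in Ioi (0 : ℝ), erlangPDF M x = 1 := by
  simp only [erlangPDF]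
  rw [integral_div, integral_pow_mul_exp_neg, div_self (by positivity)]

lemma erlangPDF_div (hM : 2 ≤ M) {x : ℝ} (hx : x ≠ 0) :
    erlangPDF M x / x = erlangPDF (M - 1) x / ((M : ℝ) - 1) := by
  obtain ⟨k, rfl⟩ : ∃ k, M = k + 2 := ⟨M - 2, by omega⟩
  simp only [erlangPDF, show k + 2 - 1 = k + 1 by omega, show k + 1 - 1 = k by omega,
    Nat.factorial_succ]
  push_cast
  rw [pow_succ, show (k : ℝ) + 2 - 1 = k + 1 by ring]
  field_simp

lemma integrableOn_erlangPDF_div (hM : 2 ≤ M) :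
    IntegrableOn (fun x => erlangPDF M x / x) (Ioi 0) :=
  IntegrableOn.congr_fun ((integrableOn_erlangPDF (M - 1)).div_const _)
    (fun _ hx => (erlangPDF_div hM (ne_of_gt hx)).symm) measurableSet_Ioi

lemma integral_erlangPDF_div (hM : 2 ≤ M) :
    ∫ x in Ioi (0 : ℝ), erlangPDF M x / x = 1 / ((M : ℝ) - 1) := by
  rw [setIntegral_congr_fun measurableSet_Ioi fun _ hx => erlangPDF_div hM (ne_of_gt hx),
    integral_div, integral_erlangPDF]

lemma setIntegral_le_of_le_div_add_mul_erlangPDF (hM : 2 ≤ M) {f : ℝ → ℝ} {a b : ℝ}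
    (hf : ∀ x ∈ Ioi 0, 0 ≤ f x) (hle : ∀ x ∈ Ioi 0, f x ≤ (a / x + b) * erlangPDF M x) :
    ∫ x in Ioi (0 : ℝ), f x ≤ a / ((M : ℝ) - 1) + b := by
  have hsplit : ∀ x, (a / x + b) * erlangPDF M x = a * (erlangPDF M x / x) + b * erlangPDF M x :=
    fun x => by ring
  simp only [hsplit] at hle
  have hint1 := (integrableOn_erlangPDF_div hM).const_mul a
  have hint2 := (integrableOn_erlangPDF M).const_mul b
  refine (setIntegral_mono_on_of_nonneg measurableSet_Ioi hf hle (hint1.add hint2)).trans_eq ?_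
  rw [integral_add hint1 hint2, integral_const_mul, integral_const_mul, integral_erlangPDF_div hM,
    integral_erlangPDF]
  ring

end Erlang

lemma integral_one_sub_pow (k : ℕ) (t : ℝ) :
    ∫ z in t..1, (1 - z) ^ k = (1 - t) ^ (k + 1) / (k + 1) := by
  rw [intervalIntegral.integral_comp_sub_left (fun u : ℝ => u ^ k), integral_pow]
  norm_num

lemma div_le_integral_one_sub_pow_div (k : ℕ) {t : ℝ} (ht0 : 0 < t) (ht1 : t ≤ 1) :
    (1 - t) ^ (k + 1) / (k + 1) ≤ ∫ z in t..1, (1 - z) ^ k / z := by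
  have hcont : Continuous fun z : ℝ => (1 - z) ^ k := by fun_prop
  rw [← integral_one_sub_pow]
  refine intervalIntegral.integral_mono_on ht1 (hcont.intervalIntegrable t 1) ?_ fun z hz => ?_
  · refine ContinuousOn.intervalIntegrable ?_
    rw [uIcc_of_le ht1]
    exact hcont.continuousOn.div continuousOn_id fun z hz => (ht0.trans_le hz.1).ne'
  · rw [le_div_iff₀ (ht0.trans_le hz.1)]
    exact mul_le_of_le_one_right (pow_nonneg (by linarith [hz.2]) _) hz.2

section CondCorr

variable {M : ℕ} {t : ℝ}

lemma condCorrPDF_nonneg (hM : 1 ≤ M) (ht : t < 1) {z : ℝ} (hz : z ≤ 1) :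
    0 ≤ condCorrPDF M t z := by
  have : (1 : ℝ) ≤ M := by exact_mod_cast hM
  unfold condCorrPDF
  have : 0 ≤ 1 - z := by linarith
  have : 0 < 1 - t := by linarith
  positivity

lemma continuous_condCorrPDF (M : ℕ) (t : ℝ) : Continuous (condCorrPDF M t) := by
  unfold condCorrPDF; fun_prop

lemma integral_condCorrPDF (hM : 2 ≤ M) (ht : t < 1) : ∫ z in t..1, condCorrPDF M t z = 1 := by
  obtain ⟨k, rfl⟩ : ∃ k, M = k + 2 := ⟨M - 2, by omega⟩
  have h1t : (1 - t) ^ (k + 1) ≠ 0 := pow_ne_zero _ (by linarith)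
  simp only [condCorrPDF, show k + 2 - 1 = k + 1 by omega, show k + 2 - 2 = k by omega]
  rw [intervalIntegral.integral_div, intervalIntegral.integral_const_mul, integral_one_sub_pow]
  push_cast
  field_simp
  ring

lemma integral_condCorrPDF_div (M : ℕ) (t : ℝ) :
    ∫ z in t..1, condCorrPDF M t z / z
      = ((M : ℝ) - 1) / (1 - t) ^ (M - 1) * ∫ z in t..1, (1 - z) ^ (M - 2) / z := by
  rw [← intervalIntegral.integral_const_mul]
  congr 1 with z
  unfold condCorrPDF
  ring

lemma intervalIntegral_le_of_le_div_add_mul_condCorrPDF (hM : 2 ≤ M) (ht0 : 0 < t) (ht1 : t < 1)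
    {f : ℝ → ℝ} {a b : ℝ} (hf : ∀ z ∈ Ioc t 1, 0 ≤ f z)
    (hle : ∀ z ∈ Ioc t 1, f z ≤ (a / z + b) * condCorrPDF M t z) :
    ∫ z in t..1, f z
      ≤ a * (((M : ℝ) - 1) / (1 - t) ^ (M - 1) * ∫ z in t..1, (1 - z) ^ (M - 2) / z) + b := by
  have hsplit : ∀ z, (a / z + b) * condCorrPDF M t z
      = a * (condCorrPDF M t z / z) + b * condCorrPDF M t z := fun z => by ring
  simp only [hsplit] at hle
  have hint1 : IntervalIntegrable (fun z => a * (condCorrPDF M t z / z)) volume t 1 := by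
    refine ContinuousOn.intervalIntegrable ?_
    rw [uIcc_of_le ht1.le]
    exact continuousOn_const.mul ((continuous_condCorrPDF M t).continuousOn.div continuousOn_id
      fun z hz => (ht0.trans_le hz.1).ne')
  have hint2 : IntervalIntegrable (fun z => b * condCorrPDF M t z) volume t 1 :=
    (continuous_const.mul (continuous_condCorrPDF M t)).intervalIntegrable t 1
  have hmono := setIntegral_mono_on_of_nonneg measurableSet_Ioc hf hle
    ((hint1.add hint2).def'.mono_set (by rw [uIoc_of_le ht1.le]))
  rw [← intervalIntegral.integral_of_le ht1.le, ← intervalIntegral.integral_of_le ht1.le,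
    intervalIntegral.integral_add hint1 hint2, intervalIntegral.integral_const_mul,
    intervalIntegral.integral_const_mul, integral_condCorrPDF_div, integral_condCorrPDF hM ht1,
    mul_one] at hmono
  exact hmono

end CondCorr

lemma div_min_le_div_add_div {a b c : ℝ} (ha : 0 < a) (hb : 0 < b) (hc : 0 ≤ c) :
    c / min a b ≤ c / a + c / b := by
  rcases min_choice a b with h | h <;> rw [h]
  · exact le_add_of_nonneg_right (div_nonneg hc hb.le)
  · exact le_add_of_nonneg_left (div_nonneg hc ha.le)

lemma add_le_mul_one_add_min {A B E u v : ℝ} (hA : 0 ≤ A) (hB : 0 ≤ B) (hu : 0 ≤ u)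
    (hv : 0 ≤ v) (hEu : E ≤ B * u) (hEv : E ≤ A * v) :
    A + B + E ≤ (A + B) * (1 + min u v) := by
  rcases min_choice u v with h | h <;> rw [h] <;> nlinarith

section PMin

variable {β1 β2 γ1 γ2 : ℝ}

lemma pMin_nonneg (hβ1 : 0 < β1) (hβ2 : 0 < β2) (hγ1 : 0 < γ1) (hγ2 : 0 < γ2) {x y z : ℝ}
    (hx : 0 < x) (hy : 0 < y) (hz : 0 < z) : 0 ≤ pMin β1 β2 γ1 γ2 x y z := by
  have : 0 < min (β1 * x) (β2 * y * z) := lt_min (by positivity) (by positivity)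
  unfold pMin; positivity

lemma pMin_le (hβ1 : 0 < β1) (hβ2 : 0 < β2) (hγ2 : 0 ≤ γ2) {x y z : ℝ}
    (hx : 0 < x) (hy : 0 < y) (hz : 0 < z) :
    pMin β1 β2 γ1 γ2 x y z ≤ (γ1 * (1 + γ2) + γ2) / β1 / x + γ2 / (β2 * y * z) := by
  have := div_min_le_div_add_div (mul_pos hβ1 hx) (by positivity : 0 < β2 * y * z) hγ2
  rw [pMin, add_div, add_div, div_div, div_div]
  linarith

variable {M : ℕ}

lemma pMin_mul_erlangPDF_mul_nonneg (hβ1 : 0 < β1) (hβ2 : 0 < β2) (hγ1 : 0 < γ1) (hγ2 : 0 < γ2)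
    {x y z u v : ℝ} (hx : 0 < x) (hy : 0 < y) (hz : 0 < z) (hu : 0 ≤ u) (hv : 0 ≤ v) :
    0 ≤ pMin β1 β2 γ1 γ2 x y z * erlangPDF M x * u * v := by
  have := pMin_nonneg hβ1 hβ2 hγ1 hγ2 hx hy hz
  have := erlangPDF_nonneg (M := M) hx.le
  positivity

lemma setIntegral_pMin_mul_erlangPDF_le (hM : 2 ≤ M) (hβ1 : 0 < β1) (hβ2 : 0 < β2)
    (hγ1 : 0 < γ1) (hγ2 : 0 < γ2) {y z u v : ℝ} (hy : 0 < y) (hz : 0 < z) (hu : 0 ≤ u)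
    (hv : 0 ≤ v) :
    ∫ x in Ioi (0 : ℝ), pMin β1 β2 γ1 γ2 x y z * erlangPDF M x * u * v
      ≤ ((γ1 * (1 + γ2) + γ2) / β1 / ((M : ℝ) - 1) + γ2 / (β2 * y * z)) * u * v := by
  refine (setIntegral_le_of_le_div_add_mul_erlangPDF hM (a := (γ1 * (1 + γ2) + γ2) / β1 * u * v)
    (b := γ2 / (β2 * y * z) * u * v) (fun x hx => ?_) (fun x hx => ?_)).trans_eq (by ring)
  · exact pMin_mul_erlangPDF_mul_nonneg hβ1 hβ2 hγ1 hγ2 hx hy hz hu hv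
  · calc pMin β1 β2 γ1 γ2 x y z * erlangPDF M x * u * v
        ≤ ((γ1 * (1 + γ2) + γ2) / β1 / x + γ2 / (β2 * y * z)) * erlangPDF M x * u * v := by
          gcongr
          · exact erlangPDF_nonneg hx.le
          · exact pMin_le hβ1 hβ2 hγ2.le hx hy hz
      _ = _ := by ring

lemma setIntegral_setIntegral_pMin_mul_erlangPDF_le (hM : 2 ≤ M) (hβ1 : 0 < β1) (hβ2 : 0 < β2)
    (hγ1 : 0 < γ1) (hγ2 : 0 < γ2) {z v : ℝ} (hz : 0 < z) (hv : 0 ≤ v) :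
    ∫ y in Ioi (0 : ℝ), ∫ x in Ioi (0 : ℝ),
        pMin β1 β2 γ1 γ2 x y z * erlangPDF M x * erlangPDF M y * v
      ≤ ((γ1 * (1 + γ2) + γ2) / β1 + γ2 / (β2 * z)) / ((M : ℝ) - 1) * v := by
  refine (setIntegral_le_of_le_div_add_mul_erlangPDF hM (a := γ2 / (β2 * z) * v)
    (b := (γ1 * (1 + γ2) + γ2) / β1 / ((M : ℝ) - 1) * v) (fun y hy => ?_)
    (fun y hy => ?_)).trans_eq (by ring)
  · exact setIntegral_nonneg measurableSet_Ioi fun x hx =>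
      pMin_mul_erlangPDF_mul_nonneg hβ1 hβ2 hγ1 hγ2 hx hy hz (erlangPDF_nonneg hy.le) hv
  · exact (setIntegral_pMin_mul_erlangPDF_le hM hβ1 hβ2 hγ1 hγ2 hy hz
      (erlangPDF_nonneg hy.le) hv).trans_eq (by ring)

lemma integral_pMin_le {t : ℝ} (hM : 2 ≤ M) (hβ1 : 0 < β1) (hβ2 : 0 < β2) (hγ1 : 0 < γ1)
    (hγ2 : 0 < γ2) (ht0 : 0 < t) (ht1 : t < 1) :
    ∫ z in t..1, ∫ y in Ioi (0 : ℝ), ∫ x in Ioi (0 : ℝ),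
        pMin β1 β2 γ1 γ2 x y z * erlangPDF M x * erlangPDF M y * condCorrPDF M t z
      ≤ γ2 / β2 / ((M : ℝ) - 1)
          * (((M : ℝ) - 1) / (1 - t) ^ (M - 1) * ∫ z in t..1, (1 - z) ^ (M - 2) / z)
        + (γ1 * (1 + γ2) + γ2) / β1 / ((M : ℝ) - 1) := by
  refine intervalIntegral_le_of_le_div_add_mul_condCorrPDF hM ht0 ht1 (fun z hz => ?_)
    (fun z hz => ?_)
  · exact setIntegral_nonneg measurableSet_Ioi fun y hy => setIntegral_nonneg measurableSet_Ioi
      fun x hx => pMin_mul_erlangPDF_mul_nonneg hβ1 hβ2 hγ1 hγ2 hx hy (ht0.trans hz.1)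
        (erlangPDF_nonneg hy.le) (condCorrPDF_nonneg (by omega) ht1 hz.2)
  · exact (setIntegral_setIntegral_pMin_mul_erlangPDF_le hM hβ1 hβ2 hγ1 hγ2 (ht0.trans hz.1)
      (condCorrPDF_nonneg (by omega) ht1 hz.2)).trans_eq (by ring)

end PMin

lemma power_bound_le_mul_one_add_min {n D J β1 β2 γ1 γ2 : ℝ} (hn : 0 < n) (hD : 0 < D)
    (hJ : D / n ≤ J) (hβ1 : 0 < β1) (hβ2 : 0 < β2) (hγ1 : 0 < γ1) (hγ2 : 0 < γ2) :
    γ2 / β2 / n * (n / D * J) + (γ1 * (1 + γ2) + γ2) / β1 / n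
      ≤ (γ1 * (1 + γ2) / (n * β1) + γ2 / (D * β2) * J) * (1 + min (β2 / β1) (γ2 / γ1)) := by
  have hJterm : γ2 / (n * β1) ≤ γ2 / (D * β2) * J * (β2 / β1) :=
    calc γ2 / (n * β1) = γ2 / β1 / D * (D / n) := by field_simp
      _ ≤ γ2 / β1 / D * J := by gcongr
      _ = _ := by field_simp
  have hγterm : γ2 / (n * β1) ≤ γ1 * (1 + γ2) / (n * β1) * (γ2 / γ1) :=
    calc γ2 / (n * β1) ≤ (1 + γ2) * γ2 / (n * β1) := by
          gcongr
          exact le_mul_of_one_le_left hγ2.le (by linarith)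
      _ = _ := by field_simp
  refine le_of_eq_of_le ?_ (add_le_mul_one_add_min (by positivity)
    (mul_nonneg (by positivity) ((by positivity : (0 : ℝ) ≤ D / n).trans hJ))
    (by positivity) (by positivity) hJterm hγterm)
  field_simp
  ring

/-- CB-NOMA upper bound on the conditional average minimal transmit power:
`E_t[P_min] ≤ P̃_lo(t) · (1 + min(β2/β1, γ2/γ1))`. -/
theorem cbnoma_avg_power_upper_bound (M : ℕ) (hM : 2 ≤ M)
    (β1 β2 γ1 γ2 t : ℝ) (hβ : β2 ≤ β1) (hβ2 : 0 < β2)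
    (hγ1 : 0 < γ1) (hγ2 : 0 < γ2) (ht0 : 0 < t) (ht1 : t < 1) :
    (∫ z in t..1, ∫ y in Ioi (0 : ℝ), ∫ x in Ioi (0 : ℝ),
        (γ1 * (1 + γ2) / (β1 * x) + γ2 / min (β1 * x) (β2 * y * z))
          * (x ^ (M - 1) * Real.exp (-x) / (Nat.factorial (M - 1) : ℝ))
          * (y ^ (M - 1) * Real.exp (-y) / (Nat.factorial (M - 1) : ℝ))
          * (((M : ℝ) - 1) * (1 - z) ^ (M - 2) / (1 - t) ^ (M - 1)))
      ≤ (γ1 * (1 + γ2) / (((M : ℝ) - 1) * β1)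
          + (γ2 / ((1 - t) ^ (M - 1) * β2)) * (∫ z in t..1, (1 - z) ^ (M - 2) / z))
        * (1 + min (β2 / β1) (γ2 / γ1)) := by
  have hβ1 : 0 < β1 := hβ2.trans_le hβ
  have hn : (0 : ℝ) < (M : ℝ) - 1 := by
    have : (2 : ℝ) ≤ M := by exact_mod_cast hM
    linarith
  have hJ : (1 - t) ^ (M - 1) / ((M : ℝ) - 1) ≤ ∫ z in t..1, (1 - z) ^ (M - 2) / z := by
    obtain ⟨k, rfl⟩ : ∃ k, M = k + 2 := ⟨M - 2, by omega⟩
    convert div_le_integral_one_sub_pow_div k ht0 ht1.le using 2 <;> push_cast <;> ring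
  -- the integrand unfolds to `pMin … * erlangPDF M x * erlangPDF M y * condCorrPDF M t z`
  exact (integral_pMin_le hM hβ1 hβ2 hγ1 hγ2 ht0 ht1).trans
    (power_bound_le_mul_one_add_min hn (pow_pos (by linarith) _) hJ hβ1 hβ2 hγ1 hγ2)
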